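/- Let F : ℝ × ℝ^d → ℝ^d be continuously differentiable with |F(t,a) − F(t,b)| ≤ L₁|a − b| and with total Jacobian DF satisfying |DF(t₁,a) − DF(t₂,b)| ≤ L₂(|t₁ − t₂| + |a − b|), and fix p ≥ 1. Then there exist τ₀ > 0 and C_drel > 0, depending only on L₁, L₂, p and t_end − t₀, with the following property: for every time mesh 𝒯 of [t₀,t_end] with max_{T∈𝒯} |T| ≤ τ₀, every refinement 𝒯̂ of 𝒯, and every pair of Petrov–Galerkin solutions y_𝒯 ∈ S^p(𝒯) and y_𝒯̂ ∈ S^p(𝒯̂) (both with initial value y₀), one has ‖y_𝒯̂ − y_𝒯‖²_{H¹([t₀,t_end])} ≤ C_drel ∑_{T ∈ 𝒯 \ 𝒯̂} η(y_𝒯; T)², i.e., the difference of the two discrete solutions is controlled by the estimator contributions of y_𝒯 on the refined intervals only. -/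

import Mathlib

open MeasureTheory Set
open scoped Classical

noncomputable section

/-- `ℝ^d` with the Euclidean norm. -/
abbrev Euc (d : ℕ) := EuclideanSpace ℝ (Fin d)

/-- A time mesh of `[t₀, t_end]`: a finite partition into closed intervals determined
by break points `t₀ = pts 0 < pts 1 < … < pts n = t_end`. -/
structure TimeMesh (t0 tend : ℝ) where
  n : ℕ
  npos : 0 < n
  pts : Fin (n + 1) → ℝ
  mono : StrictMono pts
  first : pts 0 = t0
  last : pts (Fin.last n) = tend

namespace TimeMesh

variable {t0 tend : ℝ}

/-- Left endpoint of the `i`-th mesh interval. -/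
def a (M : TimeMesh t0 tend) (i : Fin M.n) : ℝ := M.pts i.castSucc

/-- Right endpoint of the `i`-th mesh interval. -/
def b (M : TimeMesh t0 tend) (i : Fin M.n) : ℝ := M.pts i.succ

/-- Length `|T|` of the `i`-th mesh interval. -/
def len (M : TimeMesh t0 tend) (i : Fin M.n) : ℝ := M.b i - M.a i

/-- Maximal step size `max_{T ∈ 𝒯} |T|`. -/
def maxStep (M : TimeMesh t0 tend) : ℝ :=
  Finset.univ.sup' (Finset.univ_nonempty_iff.mpr (Fin.pos_iff_nonempty.mp M.npos)) M.len

/-- `M'.Refines M`: every interval of `M'` is contained in an interval of `M`. -/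
def Refines (M' M : TimeMesh t0 tend) : Prop :=
  ∀ j : Fin M'.n, ∃ i : Fin M.n, Icc (M'.a j) (M'.b j) ⊆ Icc (M.a i) (M.b i)

/-- The `i`-th interval of `M` is also an interval of `M'` (a common, non-refined
interval, i.e. an element of `𝒯 ∩ 𝒯'`). -/
def Common (M M' : TimeMesh t0 tend) (i : Fin M.n) : Prop :=
  ∃ j : Fin M'.n, M'.a j = M.a i ∧ M'.b j = M.b i

end TimeMesh

/-- `f : ℝ → ℝ^d` is, on each interval of the mesh `M`, a polynomial of degree `≤ p`
(the space `P^p(𝒯)`; jumps at the break points are allowed). -/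
def PWPoly (d : ℕ) {t0 tend : ℝ} (M : TimeMesh t0 tend) (p : ℕ)
    (f : ℝ → Euc d) : Prop :=
  ∀ i : Fin M.n, ∃ c : Fin (p + 1) → Euc d,
    ∀ t ∈ Ioo (M.a i) (M.b i), f t = ∑ j : Fin (p + 1), (t ^ (j : ℕ)) • c j

/-- The squared `H¹([t₀,t_end])`-norm of a function `u` with derivative `u'`. -/
def h1Sq (d : ℕ) (t0 tend : ℝ) (u u' : ℝ → Euc d) : ℝ :=
  (∫ t in t0..tend, ‖u t‖ ^ 2) + ∫ t in t0..tend, ‖u' t‖ ^ 2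

/-- `u`, together with its piecewise derivatives `u'`, `u''`, is a member of `S^p(𝒯)`:
continuous on `[t₀,t_end]` and piecewise polynomial of degree `≤ p`, with
`u' = ∂ₜ u` and `u'' = ∂ₜ² u` on the interior of every mesh interval. -/
structure SPMem (d : ℕ) {t0 tend : ℝ} (M : TimeMesh t0 tend) (p : ℕ)
    (u u' u'' : ℝ → Euc d) : Prop where
  cont : ContinuousOn u (Icc t0 tend)
  poly : PWPoly d M p u
  deriv1 : ∀ i : Fin M.n, ∀ t ∈ Ioo (M.a i) (M.b i), HasDerivAt u (u' t) t
  deriv2 : ∀ i : Fin M.n, ∀ t ∈ Ioo (M.a i) (M.b i), HasDerivAt u' (u'' t) t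

/-- `u ∈ S^p(𝒯)` (with piecewise derivatives `u'`, `u''`) is a solution of the
continuous Petrov–Galerkin scheme: `u t₀ = y₀` and
`∫ (∂ₜ u − F(t, u)) · v dt = 0` for all test functions `v ∈ P^{p−1}(𝒯)`. -/
structure PGSol (d : ℕ) {t0 tend : ℝ} (M : TimeMesh t0 tend) (p : ℕ)
    (F : ℝ → Euc d → Euc d) (y0 : Euc d) (u u' u'' : ℝ → Euc d) : Prop where
  mem : SPMem d M p u u' u''
  init : u t0 = y0
  galerkin : ∀ v : ℝ → Euc d, PWPoly d M (p - 1) v →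
    (∫ t in t0..tend, (inner ℝ (u' t - F t (u t)) (v t) : ℝ)) = 0

/-- The squared local error estimator
`η(w; T)² = |T|² ∫_T ‖∂ₜ F(·,w) + ∇_y F(·,w) ∂ₜ w − ∂ₜ² w‖²` on the interval
`T = [aa, bb]`, where `Ft`, `Fy` are the partial derivatives of `F`. -/
def etaSq (d : ℕ) (Ft : ℝ → Euc d → Euc d) (Fy : ℝ → Euc d → (Euc d →L[ℝ] Euc d))
    (w w' w'' : ℝ → Euc d) (aa bb : ℝ) : ℝ :=
  (bb - aa) ^ 2 * ∫ t in aa..bb, ‖Ft t (w t) + Fy t (w t) (w' t) - w'' t‖ ^ 2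

/-!
Let `e = y_𝒯̂ − y_𝒯`. On an interval `T` of `𝒯`, the function `𝟙_T ∂ₜe` is a test function of the
fine scheme, and of the coarse one as well when `T` is not refined. Galerkin orthogonality and the
Lipschitz bound then give `‖∂ₜe‖²_T ≤ 2L₁²‖e‖²_T + 2θ_T`, where `θ_T` is `‖∂ₜy_𝒯 − F(·, y_𝒯)‖²_T`
on refined intervals and `0` on the others. Constants are coarse test functions, so the residual
has mean zero on `T` and a Poincaré inequality gives `θ_T ≤ η(y_𝒯; T)²`.

Writing `e` on `T` through its value at the left end point, the step size condition
`8(1 + L₁²)|T| ≤ 1` turns these bounds into the recursion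
`|e(t_{k+1})|² ≤ (1 + (1 + 16L₁²)|T|) |e(t_k)|² + 8θ_T` with `e(t₀) = 0`. The discrete Grönwall
inequality bounds every nodal value by `8 exp((1 + 16L₁²)(t_end − t₀)) ∑ θ_T`, and summing the
local bounds over `𝒯` gives the estimate.
-/

open Topology

section Polynomial

variable {E : Type*} [NormedAddCommGroup E] [NormedSpace ℝ E]

def polyEval {m : ℕ} (c : Fin m → E) (t : ℝ) : E := ∑ j : Fin m, t ^ (j : ℕ) • c j

theorem continuous_polyEval {m : ℕ} (c : Fin m → E) : Continuous (polyEval c) := by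
  unfold polyEval; fun_prop

theorem hasDerivAt_polyEval {m : ℕ} (c : Fin (m + 1) → E) (t : ℝ) :
    HasDerivAt (polyEval c) (polyEval (fun j : Fin m => ((j : ℝ) + 1) • c j.succ) t) t := by
  have h : HasDerivAt (polyEval c) (∑ j : Fin (m + 1), ((j : ℕ) * t ^ ((j : ℕ) - 1)) • c j) t :=
    HasDerivAt.fun_sum fun j _ => (hasDerivAt_pow (j : ℕ) t).smul_const (c j)
  convert h using 1
  simp [polyEval, Fin.sum_univ_succ, smul_smul, mul_comm]

def PolyOn (p : ℕ) (f : ℝ → E) (s : Set ℝ) : Prop :=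
  ∃ c : Fin (p + 1) → E, EqOn f (polyEval c) s

theorem polyOn_const (p : ℕ) (v : E) (s : Set ℝ) : PolyOn p (fun _ => v) s :=
  ⟨Pi.single 0 v, fun t _ => by simp [polyEval, Pi.single_apply]⟩

theorem PolyOn.mono {p : ℕ} {f : ℝ → E} {s s' : Set ℝ} (hf : PolyOn p f s) (h : s' ⊆ s) :
    PolyOn p f s' :=
  let ⟨c, hc⟩ := hf; ⟨c, hc.mono h⟩

theorem PolyOn.sub {p : ℕ} {f g : ℝ → E} {s : Set ℝ} (hf : PolyOn p f s) (hg : PolyOn p g s) :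
    PolyOn p (f - g) s := by
  obtain ⟨c, hc⟩ := hf
  obtain ⟨c', hc'⟩ := hg
  refine ⟨c - c', fun t ht => ?_⟩
  simp [polyEval, hc ht, hc' ht, smul_sub]

theorem PolyOn.indicator_of_subset {p : ℕ} {f : ℝ → E} {s S : Set ℝ} (hf : PolyOn p f s)
    (h : s ⊆ S) : PolyOn p (S.indicator f) s :=
  let ⟨c, hc⟩ := hf; ⟨c, fun t ht => by rw [indicator_of_mem (h ht), hc ht]⟩

theorem polyOn_indicator_of_disjoint (p : ℕ) (f : ℝ → E) {s S : Set ℝ} (h : Disjoint s S) :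
    PolyOn p (S.indicator f) s :=
  ⟨0, fun t ht => by simp [polyEval, indicator_of_notMem (h.notMem_of_mem_left ht)]⟩

theorem PolyOn.deriv {p : ℕ} {f f' : ℝ → E} {s : Set ℝ} (hs : IsOpen s) (hf : PolyOn p f s)
    (hd : ∀ t ∈ s, HasDerivAt f (f' t) t) : PolyOn (p - 1) f' s := by
  obtain ⟨c, hc⟩ := hf
  have hpoly : ∀ t ∈ s, HasDerivAt (polyEval c) (f' t) t := fun t ht =>
    (hd t ht).congr_of_eventuallyEq (Filter.eventuallyEq_of_mem (hs.mem_nhds ht) hc.symm)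
  cases p with
  | zero =>
    refine ⟨0, fun t ht => (hpoly t ht).unique ?_⟩
    have : polyEval c = fun _ => c 0 := funext fun t => by simp [polyEval]
    simpa [this, polyEval] using hasDerivAt_const t (c 0)
  | succ q => exact ⟨_, fun t ht => (hpoly t ht).unique (hasDerivAt_polyEval c t)⟩

theorem PolyOn.exists_continuous {p : ℕ} {f : ℝ → E} {s : Set ℝ} (hf : PolyOn p f s) :
    ∃ g, Continuous g ∧ EqOn f g s :=
  let ⟨c, hc⟩ := hf; ⟨_, continuous_polyEval c, hc⟩

end Polynomial

section Calculus

variable {E G : Type*} [NormedAddCommGroup E] [NormedAddCommGroup G]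

theorem continuousOn_uncurry_of_lipschitz {F : ℝ → E → G} {s : Set ℝ} {L : ℝ}
    (hL : ∀ t ∈ s, ∀ a b, ‖F t a - F t b‖ ≤ L * ‖a - b‖)
    (hc : ∀ a, ContinuousOn (F · a) s) : ContinuousOn ↿F (s ×ˢ univ) :=
  continuousOn_prod_of_continuousOn_lipschitzOnWith' _ L.toNNReal
    (fun t ht => LipschitzOnWith.of_dist_le' fun a _ b _ => by
      rw [dist_eq_norm, dist_eq_norm]; exact hL t ht a b)
    fun a _ => hc a

theorem continuousOn_uncurry_of_norm_sub_le {F : ℝ → E → G} {s : Set ℝ} {L : ℝ}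
    (h : ∀ t₁ ∈ s, ∀ t₂ ∈ s, ∀ a b, ‖F t₁ a - F t₂ b‖ ≤ L * (|t₁ - t₂| + ‖a - b‖)) :
    ContinuousOn ↿F (s ×ˢ univ) :=
  continuousOn_uncurry_of_lipschitz (fun t ht a b => by simpa using h t ht t ht a b)
    fun a => (LipschitzOnWith.of_dist_le' (K := L) fun t₁ h₁ t₂ h₂ => by
      simpa [dist_eq_norm, Real.norm_eq_abs] using h t₁ h₁ t₂ h₂ a a).continuousOn

theorem hasDerivAt_comp_of_partial [NormedSpace ℝ E] [NormedSpace ℝ G] {F Ft : ℝ → E → G}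
    {Fy : ℝ → E → E →L[ℝ] G} {u : ℝ → E} {u' : E} {t : ℝ}
    (hFt : ∀ᶠ x in 𝓝 (t, u t), HasDerivAt (F · x.2) (Ft x.1 x.2) x.1)
    (hFy : ∀ᶠ x in 𝓝 (t, u t), HasFDerivAt (F x.1) (Fy x.1 x.2) x.2)
    (cFt : ContinuousAt ↿Ft (t, u t)) (cFy : ContinuousAt ↿Fy (t, u t))
    (hu : HasDerivAt u u' t) :
    HasDerivAt (fun s => F s (u s)) (Ft t (u t) + Fy t (u t) u') t := by
  have hF := hasStrictFDerivAt_uncurry_coprod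
    (f₁ := fun s x => ContinuousLinearMap.toSpanSingleton ℝ (Ft s x)) hFt hFy
    ((ContinuousLinearMap.toSpanSingletonCLE (𝕜 := ℝ)).continuous.continuousAt.comp cFt) cFy
  refine (hF.hasFDerivAt.comp_hasDerivAt t ((hasDerivAt_id t).prodMk hu)).congr_deriv ?_
  change ContinuousLinearMap.toSpanSingleton ℝ (Ft t (u t)) 1 + Fy t (u t) u' = _
  rw [ContinuousLinearMap.toSpanSingleton_apply_one]

end Calculus

section Arithmetic

theorem local_step_arith {h L ε εb X I q θ : ℝ} (hh : 0 < h) (h1 : h ≤ 1)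
    (hL : 8 * L ^ 2 * h ≤ 1) (hεb : 0 ≤ εb) (hq0 : 0 ≤ q) (hXq : X ^ 2 ≤ h * q)
    (hI : I ≤ h * (ε + X) ^ 2) (hb : εb ≤ ε + X) (hq : q ≤ 2 * L ^ 2 * I + 2 * θ) :
    q ≤ 8 * L ^ 2 * h * ε ^ 2 + 4 * θ ∧ I ≤ 2 * h * ε ^ 2 + 2 * q ∧
      εb ^ 2 ≤ (1 + (1 + 16 * L ^ 2) * h) * ε ^ 2 + 8 * θ := by
  have hI' : I ≤ 2 * h * ε ^ 2 + 2 * h * q := by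
    nlinarith [mul_nonneg hh.le (sq_nonneg (ε - X)), mul_le_mul_of_nonneg_left hXq hh.le,
      mul_le_mul_of_nonneg_right h1 (mul_nonneg hh.le hq0)]
  have hq' : q ≤ 8 * L ^ 2 * h * ε ^ 2 + 4 * θ := by
    nlinarith [mul_le_mul_of_nonneg_left hI' (sq_nonneg L), mul_le_mul_of_nonneg_right hL hq0]
  have hεb' : εb ^ 2 ≤ (1 + h) * (ε ^ 2 + q) := by
    have hsq : εb ^ 2 ≤ (ε + X) ^ 2 := pow_le_pow_left₀ hεb hb 2
    refine hsq.trans (le_of_mul_le_mul_left ?_ hh)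
    nlinarith [sq_nonneg (h * ε - X), mul_le_mul_of_nonneg_left hXq hh.le]
  refine ⟨hq', by nlinarith [mul_le_mul_of_nonneg_right h1 hq0], hεb'.trans ?_⟩
  nlinarith [mul_le_mul_of_nonneg_left hq' (show 0 ≤ 1 - h by linarith),
    mul_nonneg (mul_nonneg (sq_nonneg L) hh.le) (sq_nonneg ε)]

theorem discrete_gronwall_fin {n : ℕ} {x : Fin (n + 1) → ℝ} {c b : Fin n → ℝ}
    (hx0 : 0 ≤ x 0) (hc : ∀ i, 0 ≤ c i) (hb : ∀ i, 0 ≤ b i)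
    (hstep : ∀ i, x i.succ ≤ (1 + c i) * x i.castSucc + b i) (m : Fin (n + 1)) :
    x m ≤ (x 0 + ∑ i, b i) * Real.exp (∑ i, c i) := by
  let ext : (Fin n → ℝ) → ℕ → ℝ := fun f k => if hk : k < n then f ⟨k, hk⟩ else 0
  have hsum : ∀ f, ∑ k ∈ Finset.Ico 0 (n + 1), ext f k = ∑ i, f i := fun f => by
    rw [← Finset.range_eq_Ico, Finset.sum_range_succ, ← Fin.sum_univ_eq_sum_range (ext f)]
    simp [ext]
  have := discrete_gronwall_Ico (u := fun k => x ⟨min k n, by omega⟩) (c := ext c) (b := ext b)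
    (n₀ := 0) (n₁ := n + 1) hx0 (fun k _ => ?_) (fun k _ => ?_) (fun k _ => ?_)
    (n := m) (Finset.mem_Ico.2 ⟨Nat.zero_le _, m.is_lt⟩)
  · rw [hsum, hsum] at this
    simpa [min_eq_left (Nat.lt_succ_iff.1 m.is_lt)] using this
  · by_cases hk : k < n
    · simpa [ext, hk, min_eq_left hk.le, min_eq_left (Nat.succ_le_of_lt hk)] using
        hstep ⟨k, hk⟩
    · have hk' : min (k + 1) n = min k n := by omega
      simp [ext, hk, hk']
  · by_cases hk : k < n <;> simp [ext, hk, hc]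
  · by_cases hk : k < n <;> simp [ext, hk, hb]

def drelConst (L T : ℝ) : ℝ := (16 + 192 * L ^ 2) * T * Real.exp ((1 + 16 * L ^ 2) * T) + 12

theorem drelConst_pos (L : ℝ) {T : ℝ} (hT : 0 ≤ T) : 0 < drelConst L T := by
  unfold drelConst; positivity

theorem sum_le_of_local_steps {n : ℕ} {L T : ℝ} {h I q θ : Fin n → ℝ} {x : Fin (n + 1) → ℝ}
    (hh : ∀ i, 0 ≤ h i) (hT : ∑ i, h i = T) (hθ : ∀ i, 0 ≤ θ i) (hx0 : x 0 = 0)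
    (hstep : ∀ i, x i.succ ≤ (1 + (1 + 16 * L ^ 2) * h i) * x i.castSucc + 8 * θ i)
    (hq : ∀ i, q i ≤ 8 * L ^ 2 * h i * x i.castSucc + 4 * θ i)
    (hI : ∀ i, I i ≤ 2 * h i * x i.castSucc + 2 * q i) :
    ∑ i, I i + ∑ i, q i ≤ drelConst L T * ∑ i, θ i := by
  set B := Real.exp ((1 + 16 * L ^ 2) * T) * (8 * ∑ i, θ i)
  have hx : ∀ m, x m ≤ B := fun m => by
    have := discrete_gronwall_fin hx0.ge (fun i => mul_nonneg (by positivity) (hh i))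
      (fun i => by linarith [hθ i]) hstep m
    rwa [hx0, zero_add, ← Finset.mul_sum, ← Finset.mul_sum, hT, mul_comm] at this
  have hq' : ∑ i, q i ≤ 8 * L ^ 2 * B * T + 4 * ∑ i, θ i := by
    rw [← hT, Finset.mul_sum, Finset.mul_sum, ← Finset.sum_add_distrib]
    exact Finset.sum_le_sum fun i _ => (hq i).trans (by
      nlinarith [mul_le_mul_of_nonneg_left (hx i.castSucc)
        (mul_nonneg (sq_nonneg L) (hh i))])
  have hI' : ∑ i, I i ≤ 2 * B * T + 2 * ∑ i, q i := by
    rw [← hT, Finset.mul_sum, Finset.mul_sum, ← Finset.sum_add_distrib]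
    exact Finset.sum_le_sum fun i _ => (hI i).trans (by
      nlinarith [mul_le_mul_of_nonneg_left (hx i.castSucc) (hh i)])
  have : drelConst L T * ∑ i, θ i = (2 + 24 * L ^ 2) * B * T + 12 * ∑ i, θ i := by
    unfold drelConst; ring
  rw [this]
  linarith

end Arithmetic

section Integral

variable {E : Type*} [NormedAddCommGroup E]

theorem sq_intervalIntegral_le {f : ℝ → ℝ} {a b : ℝ} (hab : a ≤ b)
    (hf : IntervalIntegrable f volume a b)
    (hf2 : IntervalIntegrable (fun t => f t ^ 2) volume a b) :
    (∫ t in a..b, f t) ^ 2 ≤ (b - a) * ∫ t in a..b, f t ^ 2 := by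
  rcases hab.eq_or_lt with rfl | hlt
  · simp
  set m := (∫ t in a..b, f t) / (b - a)
  have hm : m * (b - a) = ∫ t in a..b, f t := div_mul_cancel₀ _ (sub_pos.2 hlt).ne'
  have hvar : 0 ≤ ∫ t in a..b, (f t ^ 2 - 2 * m * f t + m ^ 2) :=
    intervalIntegral.integral_nonneg hab fun t _ => by nlinarith [sq_nonneg (f t - m)]
  rw [intervalIntegral.integral_add (hf2.sub (hf.const_mul _)) intervalIntegrable_const,
    intervalIntegral.integral_sub hf2 (hf.const_mul _), intervalIntegral.integral_const_mul,
    intervalIntegral.integral_const, smul_eq_mul, ← hm] at hvar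
  rw [← hm]
  nlinarith [mul_nonneg (sub_pos.2 hlt).le hvar]

theorem norm_le_add_integral_norm [NormedSpace ℝ E] {e e' : ℝ → E} {a b : ℝ}
    (hftc : ∀ t ∈ Icc a b, e t - e a = ∫ s in a..t, e' s)
    (he' : IntervalIntegrable e' volume a b) :
    ∀ t ∈ Icc a b, ‖e t‖ ≤ ‖e a‖ + ∫ s in a..b, ‖e' s‖ := fun t ht => calc
  ‖e t‖ ≤ ‖e a‖ + ‖e t - e a‖ := norm_le_insert' _ _
  _ ≤ ‖e a‖ + ∫ s in a..t, ‖e' s‖ := by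
    rw [hftc t ht]; gcongr; exact intervalIntegral.norm_integral_le_integral_norm ht.1
  _ ≤ ‖e a‖ + ∫ s in a..b, ‖e' s‖ := by
    gcongr
    exact intervalIntegral.integral_mono_interval le_rfl ht.1 ht.2
      (Filter.Eventually.of_forall fun _ => norm_nonneg _) he'.norm

theorem norm_sub_le_integral_norm [NormedSpace ℝ E] [CompleteSpace E] {R ρ : ℝ → E} {a b : ℝ}
    (hR : ∀ t ∈ Ioo a b, HasDerivAt R (ρ t) t) (hρ : IntervalIntegrable ρ volume a b) {s t : ℝ}
    (hs : s ∈ Ioo a b) (ht : t ∈ Ioo a b) : ‖R t - R s‖ ≤ ∫ x in a..b, ‖ρ x‖ := by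
  wlog hst : s ≤ t generalizing s t
  · rw [norm_sub_rev]; exact this ht hs (le_of_not_ge hst)
  have hsub : Icc s t ⊆ Ioo a b := Icc_subset_Ioo hs.1 ht.2
  have hab : a ≤ b := (hs.1.trans hs.2).le
  rw [← intervalIntegral.integral_eq_sub_of_hasDerivAt_of_le hst
    (fun x hx => (hR x (hsub hx)).continuousAt.continuousWithinAt)
    (fun x hx => hR x (hsub (Ioo_subset_Icc_self hx)))
    (hρ.mono_set (by
      rw [uIcc_of_le hst, uIcc_of_le hab]; exact hsub.trans Ioo_subset_Icc_self))]
  exact (intervalIntegral.norm_integral_le_integral_norm hst).trans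
    (intervalIntegral.integral_mono_interval hs.1.le hst ht.2.le
      (Filter.Eventually.of_forall fun _ => norm_nonneg _) hρ.norm)

theorem integral_norm_sq_le_of_integral_eq_zero [NormedSpace ℝ E] [CompleteSpace E]
    {R ρ : ℝ → E} {a b : ℝ} (hab : a ≤ b) (hR : ∀ t ∈ Ioo a b, HasDerivAt R (ρ t) t)
    (hRi : IntervalIntegrable R volume a b)
    (hR2 : IntervalIntegrable (fun t => ‖R t‖ ^ 2) volume a b)
    (hρ : IntervalIntegrable ρ volume a b)
    (hρ2 : IntervalIntegrable (fun t => ‖ρ t‖ ^ 2) volume a b)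
    (hmean : ∫ t in a..b, R t = 0) :
    ∫ t in a..b, ‖R t‖ ^ 2 ≤ (b - a) ^ 2 * ∫ t in a..b, ‖ρ t‖ ^ 2 := by
  set I := ∫ t in a..b, ‖ρ t‖
  have hpt : ∀ t ∈ Ioo a b, ‖R t‖ ≤ I := by
    intro t ht
    have hlen : 0 < b - a := sub_pos.2 (ht.1.trans ht.2)
    have hint : IntervalIntegrable (fun s => ‖R t - R s‖) volume a b :=
      (intervalIntegrable_const.sub hRi).norm
    have hmean' : ∫ s in a..b, (R t - R s) = (b - a) • R t := by
      rw [intervalIntegral.integral_sub intervalIntegrable_const hRi, hmean, sub_zero,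
        intervalIntegral.integral_const]
    have : (b - a) * ‖R t‖ ≤ (b - a) * I := calc
      (b - a) * ‖R t‖ = ‖∫ s in a..b, (R t - R s)‖ := by
        rw [hmean', norm_smul, Real.norm_of_nonneg hlen.le]
      _ ≤ ∫ s in a..b, ‖R t - R s‖ := intervalIntegral.norm_integral_le_integral_norm hab
      _ ≤ ∫ _ in a..b, I := intervalIntegral.integral_mono_on_of_le_Ioo hab hint
          intervalIntegrable_const fun s hs => norm_sub_le_integral_norm hR hρ hs ht
      _ = (b - a) * I := by simp
    exact le_of_mul_le_mul_left this hlen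
  calc ∫ t in a..b, ‖R t‖ ^ 2 ≤ ∫ _ in a..b, I ^ 2 :=
        intervalIntegral.integral_mono_on_of_le_Ioo hab hR2 intervalIntegrable_const
          fun t ht => pow_le_pow_left₀ (norm_nonneg _) (hpt t ht) 2
    _ = (b - a) * I ^ 2 := by simp
    _ ≤ (b - a) * ((b - a) * ∫ t in a..b, ‖ρ t‖ ^ 2) :=
        mul_le_mul_of_nonneg_left (sq_intervalIntegral_le hab hρ.norm hρ2) (sub_nonneg.2 hab)
    _ = (b - a) ^ 2 * ∫ t in a..b, ‖ρ t‖ ^ 2 := by ring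

theorem integral_norm_sq_le_of_integral_inner [InnerProductSpace ℝ E] {w g : ℝ → E}
    {c : ℝ → ℝ} {a b : ℝ} (hab : a ≤ b)
    (hw : IntervalIntegrable (fun t => ‖w t‖ ^ 2) volume a b)
    (hgw : IntervalIntegrable (fun t => inner ℝ (g t) (w t)) volume a b)
    (hc : IntervalIntegrable (fun t => c t ^ 2) volume a b)
    (heq : ∫ t in a..b, ‖w t‖ ^ 2 = ∫ t in a..b, inner ℝ (g t) (w t))
    (hg : ∀ t ∈ Ioo a b, ‖g t‖ ≤ c t) :
    ∫ t in a..b, ‖w t‖ ^ 2 ≤ ∫ t in a..b, c t ^ 2 := by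
  have h := intervalIntegral.integral_mono_on_of_le_Ioo hab hgw
    ((hc.const_mul (1 / 2)).add (hw.const_mul (1 / 2))) fun t ht => by
      nlinarith [real_inner_le_norm (g t) (w t), hg t ht, norm_nonneg (w t),
        sq_nonneg (c t - ‖w t‖)]
  rw [intervalIntegral.integral_add (hc.const_mul _) (hw.const_mul _),
    intervalIntegral.integral_const_mul, intervalIntegral.integral_const_mul, ← heq] at h
  linarith

theorem integral_mul_add_sq_le {f g : ℝ → ℝ} {a b L : ℝ} (hab : a ≤ b)
    (hfg : IntervalIntegrable (fun t => (L * f t + g t) ^ 2) volume a b)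
    (hf : IntervalIntegrable (fun t => f t ^ 2) volume a b)
    (hg : IntervalIntegrable (fun t => g t ^ 2) volume a b) :
    ∫ t in a..b, (L * f t + g t) ^ 2 ≤
      2 * L ^ 2 * (∫ t in a..b, f t ^ 2) + 2 * ∫ t in a..b, g t ^ 2 := calc
  ∫ t in a..b, (L * f t + g t) ^ 2
      ≤ ∫ t in a..b, (2 * L ^ 2 * f t ^ 2 + 2 * g t ^ 2) :=
        intervalIntegral.integral_mono_on hab hfg ((hf.const_mul _).add (hg.const_mul _))
          fun t _ => by nlinarith [sq_nonneg (L * f t - g t)]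
  _ = _ := by
    rw [intervalIntegral.integral_add (hf.const_mul _) (hg.const_mul _),
      intervalIntegral.integral_const_mul, intervalIntegral.integral_const_mul]

theorem integral_inner_indicator_Ioo [InnerProductSpace ℝ E] {r w : ℝ → E} {t0 tend a b : ℝ}
    (ha : t0 ≤ a) (hab : a ≤ b) (hb : b ≤ tend) :
    ∫ t in t0..tend, inner ℝ (r t) ((Ioo a b).indicator w t) =
      ∫ t in a..b, inner ℝ (r t) (w t) := by
  have hind : (fun t => inner ℝ (r t) ((Ioo a b).indicator w t)) =
      (Ioo a b).indicator fun t => inner ℝ (r t) (w t) :=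
    funext fun t => by by_cases ht : t ∈ Ioo a b <;> simp [ht]
  rw [hind, intervalIntegral.integral_of_le (ha.trans (hab.trans hb)),
    integral_indicator measurableSet_Ioo, Measure.restrict_restrict measurableSet_Ioo,
    inter_eq_left.2 (Ioo_subset_Ioc_self.trans (Ioc_subset_Ioc ha hb)),
    intervalIntegral.integral_of_le hab, integral_Ioc_eq_integral_Ioo]

theorem local_step_bounds [NormedSpace ℝ E] {e e' : ℝ → E} {a b L θ : ℝ} (hab : a < b)
    (h1 : b - a ≤ 1) (hL : 8 * L ^ 2 * (b - a) ≤ 1)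
    (hftc : ∀ t ∈ Icc a b, e t - e a = ∫ s in a..t, e' s)
    (he : IntervalIntegrable (fun t => ‖e t‖ ^ 2) volume a b)
    (he' : IntervalIntegrable e' volume a b)
    (he'2 : IntervalIntegrable (fun t => ‖e' t‖ ^ 2) volume a b)
    (hq : ∫ t in a..b, ‖e' t‖ ^ 2 ≤ 2 * L ^ 2 * (∫ t in a..b, ‖e t‖ ^ 2) + 2 * θ) :
    ∫ t in a..b, ‖e' t‖ ^ 2 ≤ 8 * L ^ 2 * (b - a) * ‖e a‖ ^ 2 + 4 * θ ∧
      ∫ t in a..b, ‖e t‖ ^ 2 ≤ 2 * (b - a) * ‖e a‖ ^ 2 + 2 * ∫ t in a..b, ‖e' t‖ ^ 2 ∧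
      ‖e b‖ ^ 2 ≤ (1 + (1 + 16 * L ^ 2) * (b - a)) * ‖e a‖ ^ 2 + 8 * θ := by
  have hpt := norm_le_add_integral_norm hftc he'
  refine local_step_arith (sub_pos.2 hab) h1 hL (norm_nonneg _)
    (intervalIntegral.integral_nonneg hab.le fun _ _ => sq_nonneg _)
    (sq_intervalIntegral_le hab.le he'.norm he'2) ?_ (hpt b ⟨hab.le, le_rfl⟩) hq
  calc ∫ t in a..b, ‖e t‖ ^ 2 ≤ ∫ _ in a..b, (‖e a‖ + ∫ s in a..b, ‖e' s‖) ^ 2 :=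
        intervalIntegral.integral_mono_on hab.le he intervalIntegrable_const
          fun t ht => pow_le_pow_left₀ (norm_nonneg _) (hpt t ht) 2
    _ = (b - a) * (‖e a‖ + ∫ s in a..b, ‖e' s‖) ^ 2 := by simp

end Integral

namespace TimeMesh

variable {t0 tend : ℝ} (M : TimeMesh t0 tend)

theorem a_lt_b (i : Fin M.n) : M.a i < M.b i := M.mono i.castSucc_lt_succ

theorem t0_le_a (i : Fin M.n) : t0 ≤ M.a i := by
  simpa [a, M.first] using M.mono.monotone (Fin.zero_le i.castSucc)

theorem b_le_tend (i : Fin M.n) : M.b i ≤ tend := by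
  simpa [b, M.last] using M.mono.monotone (Fin.le_last i.succ)

include M in
theorem t0_lt_tend : t0 < tend := by
  simpa [M.first, M.last] using M.mono (show (0 : Fin (M.n + 1)) < Fin.last M.n from M.npos)

theorem len_le_maxStep (i : Fin M.n) : M.len i ≤ M.maxStep :=
  Finset.le_sup' M.len (Finset.mem_univ i)

theorem len_le_of_maxStep_le {L : ℝ} (h : M.maxStep ≤ 1 / (8 * (1 + L ^ 2))) (i : Fin M.n) :
    M.len i ≤ 1 ∧ 8 * L ^ 2 * M.len i ≤ 1 := by
  have hi := (M.len_le_maxStep i).trans h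
  rw [le_div_iff₀ (by positivity)] at hi
  have := sub_pos.2 (M.a_lt_b i)
  constructor <;> nlinarith [sq_nonneg L]

theorem disjoint_Ioo {i k : Fin M.n} (h : i ≠ k) :
    Disjoint (Ioo (M.a i) (M.b i)) (Ioo (M.a k) (M.b k)) := by
  wlog hik : i < k generalizing i k
  · exact (this h.symm (lt_of_le_of_ne (not_lt.1 hik) h.symm)).symm
  have : M.b i ≤ M.a k := M.mono.monotone (Fin.succ_le_castSucc_iff.2 hik)
  exact Set.disjoint_left.2 fun t ht hk => (ht.2.trans_le this).not_gt hk.1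

theorem refines_refl : M.Refines M := fun j => ⟨j, subset_rfl⟩

variable {M}

theorem Refines.exists_Ioo_subset {M' : TimeMesh t0 tend} (h : M'.Refines M) (j : Fin M'.n) :
    ∃ i, Ioo (M'.a j) (M'.b j) ⊆ Ioo (M.a i) (M.b i) :=
  let ⟨i, hi⟩ := h j
  ⟨i, Ioo_subset_Ioo (hi ⟨le_rfl, (M'.a_lt_b j).le⟩).1 (hi ⟨(M'.a_lt_b j).le, le_rfl⟩).2⟩

theorem Refines.Ioo_subset_or_disjoint {M' : TimeMesh t0 tend} (h : M'.Refines M)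
    (j : Fin M'.n) (i : Fin M.n) :
    Ioo (M'.a j) (M'.b j) ⊆ Ioo (M.a i) (M.b i) ∨
      Disjoint (Ioo (M'.a j) (M'.b j)) (Ioo (M.a i) (M.b i)) := by
  obtain ⟨k, hk⟩ := h.exists_Ioo_subset j
  rcases eq_or_ne k i with rfl | hne
  · exact Or.inl hk
  · exact Or.inr ((M.disjoint_Ioo hne).mono_left hk)

variable (M)

theorem exists_mem_Ioo {x : ℝ} (hx : x ∈ Ioo t0 tend) (hpt : x ∉ range M.pts) :
    ∃ i, x ∈ Ioo (M.a i) (M.b i) := by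
  have hne : (Finset.univ.filter fun k => M.pts k < x).Nonempty :=
    ⟨0, by simpa [M.first] using hx.1⟩
  set k := (Finset.univ.filter fun k => M.pts k < x).max' hne
  have hk : M.pts k < x := (Finset.mem_filter.1 (Finset.max'_mem _ hne)).2
  have hlast : k ≠ Fin.last M.n := fun h => by
    have := hx.2; rw [h, M.last] at hk; linarith
  refine ⟨k.castPred hlast, by simpa [a] using hk, ?_⟩
  refine lt_of_not_ge fun hb => ?_
  have hb' : M.b (k.castPred hlast) < x := lt_of_le_of_ne hb fun h => hpt ⟨_, h⟩
  have := (Finset.univ.filter fun k => M.pts k < x).le_max' _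
    (Finset.mem_filter.2 ⟨Finset.mem_univ (k.castPred hlast).succ, hb'⟩)
  exact (Fin.castSucc_lt_succ (i := k.castPred hlast)).not_ge (by simpa using this)

/-- The break points indexed by `ℕ`, frozen at `t_end` from index `n` on. -/
def pt (k : ℕ) : ℝ := M.pts ⟨min k M.n, by omega⟩

theorem pt_zero : M.pt 0 = t0 := by simp only [pt, Nat.zero_min]; exact M.first

theorem pt_n : M.pt M.n = tend := by simp only [pt, min_self]; exact M.last

theorem a_eq_pt (i : Fin M.n) : M.a i = M.pt i := by
  simp only [pt, min_eq_left i.is_lt.le]; rfl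

theorem b_eq_pt (i : Fin M.n) : M.b i = M.pt (i + 1) := by
  simp only [pt, min_eq_left (Nat.succ_le_of_lt i.is_lt)]; rfl

theorem sum_len : ∑ i, M.len i = tend - t0 := by
  simp only [len, a_eq_pt, b_eq_pt]
  rw [Fin.sum_univ_eq_sum_range (fun k => M.pt (k + 1) - M.pt k), Finset.sum_range_sub,
    pt_n, pt_zero]

variable {E : Type*} [NormedAddCommGroup E]

theorem intervalIntegrable_of_pieces {f : ℝ → E}
    (h : ∀ i, IntervalIntegrable f volume (M.a i) (M.b i)) :
    IntervalIntegrable f volume t0 tend := by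
  have := IntervalIntegrable.trans_iterate (a := M.pt) (n := M.n) fun k hk => by
    simpa [a_eq_pt, b_eq_pt] using h ⟨k, hk⟩
  rwa [pt_zero, pt_n] at this

theorem integral_eq_sum [NormedSpace ℝ E] {f : ℝ → E}
    (h : ∀ i, IntervalIntegrable f volume (M.a i) (M.b i)) :
    ∫ t in t0..tend, f t = ∑ i, ∫ t in M.a i..M.b i, f t := by
  simp only [a_eq_pt, b_eq_pt]
  rw [Fin.sum_univ_eq_sum_range (fun k => ∫ t in M.pt k..M.pt (k + 1), f t),
    intervalIntegral.sum_integral_adjacent_intervals, pt_zero, pt_n]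
  intro k hk
  simpa [a_eq_pt, b_eq_pt] using h ⟨k, hk⟩

theorem integral_eq_sub_of_hasDerivAt [NormedSpace ℝ E] [CompleteSpace E] {f f' : ℝ → E}
    (hf : ContinuousOn f (Icc t0 tend))
    (hd : ∀ i, ∀ t ∈ Ioo (M.a i) (M.b i), HasDerivAt f (f' t) t)
    (hint : IntervalIntegrable f' volume t0 tend) {s t : ℝ} (hs : t0 ≤ s) (hst : s ≤ t)
    (ht : t ≤ tend) : ∫ x in s..t, f' x = f t - f s := by
  refine integral_eq_of_hasDerivAt_off_countable_of_le f f' hst (countable_range M.pts)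
    (hf.mono (Icc_subset_Icc hs ht)) (fun x hx => ?_) (hint.mono_set ?_)
  · obtain ⟨i, hi⟩ := M.exists_mem_Ioo ⟨hs.trans_lt hx.1.1, hx.1.2.trans_le ht⟩ hx.2
    exact hd i x hi
  · rw [uIcc_of_le hst, uIcc_of_le (hs.trans (hst.trans ht))]
    exact Icc_subset_Icc hs ht

end TimeMesh

theorem pwPoly_iff {d p : ℕ} {t0 tend : ℝ} {M : TimeMesh t0 tend} {f : ℝ → Euc d} :
    PWPoly d M p f ↔ ∀ i, PolyOn p f (Ioo (M.a i) (M.b i)) :=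
  Iff.rfl

def PWCont {t0 tend : ℝ} {X : Type*} [TopologicalSpace X] (M : TimeMesh t0 tend)
    (f : ℝ → X) : Prop :=
  ∀ i, ∃ g, ContinuousOn g (Icc (M.a i) (M.b i)) ∧ EqOn f g (Ioo (M.a i) (M.b i))

section PWCont

variable {t0 tend : ℝ} {M : TimeMesh t0 tend} {X Y Z : Type*} [TopologicalSpace X]
  [TopologicalSpace Y] [TopologicalSpace Z]

theorem ContinuousOn.pwCont {f : ℝ → X} (hf : ContinuousOn f (Icc t0 tend))
    (M : TimeMesh t0 tend) : PWCont M f :=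
  fun i => ⟨f, hf.mono (Icc_subset_Icc (M.t0_le_a i) (M.b_le_tend i)), eqOn_refl _ _⟩

theorem PWPoly.pwCont {d p : ℕ} {f : ℝ → Euc d} (hf : PWPoly d M p f) : PWCont M f := fun i =>
  let ⟨g, hg, he⟩ := (pwPoly_iff.1 hf i).exists_continuous
  ⟨g, hg.continuousOn, he⟩

theorem PWCont.comp₂ {φ : X → Y → Z} (hφ : Continuous fun x : X × Y => φ x.1 x.2)
    {f : ℝ → X} {g : ℝ → Y} (hf : PWCont M f) (hg : PWCont M g) :
    PWCont M fun t => φ (f t) (g t) := fun i => by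
  obtain ⟨f₁, hf₁, hff₁⟩ := hf i
  obtain ⟨g₁, hg₁, hgg₁⟩ := hg i
  exact ⟨fun t => φ (f₁ t) (g₁ t), hφ.comp_continuousOn (hf₁.prodMk hg₁),
    fun t ht => by simp only [hff₁ ht, hgg₁ ht]⟩

theorem PWCont.comp {φ : X → Y} (hφ : Continuous φ) {f : ℝ → X} (hf : PWCont M f) :
    PWCont M fun t => φ (f t) := fun i =>
  let ⟨g, hg, hfg⟩ := hf i
  ⟨fun t => φ (g t), hφ.comp_continuousOn hg, fun t ht => by simp only [hfg ht]⟩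

theorem PWCont.of_refines {M' : TimeMesh t0 tend} (h : M'.Refines M) {f : ℝ → X}
    (hf : PWCont M f) : PWCont M' f := fun j => by
  obtain ⟨i, hji⟩ := h.exists_Ioo_subset j
  obtain ⟨g, hg, hfg⟩ := hf i
  have hends := (Ioo_subset_Ioo_iff (M'.a_lt_b j)).1 hji
  exact ⟨g, hg.mono (Icc_subset_Icc hends.1 hends.2), hfg.mono hji⟩

variable {E : Type*} [NormedAddCommGroup E]

theorem PWCont.intervalIntegrable_piece {f : ℝ → E} (hf : PWCont M f) (i : Fin M.n) :
    IntervalIntegrable f volume (M.a i) (M.b i) := by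
  obtain ⟨g, hg, hfg⟩ := hf i
  exact (hg.intervalIntegrable_of_Icc (M.a_lt_b i).le).congr_uIoo
    (uIoo_of_le (M.a_lt_b i).le ▸ hfg.symm)

theorem PWCont.intervalIntegrable {f : ℝ → E} (hf : PWCont M f) {a b : ℝ} (ha : t0 ≤ a)
    (hab : a ≤ b) (hb : b ≤ tend) : IntervalIntegrable f volume a b :=
  (M.intervalIntegrable_of_pieces hf.intervalIntegrable_piece).mono_set
    (uIcc_subset_uIcc (mem_uIcc_of_le ha (hab.trans hb)) (mem_uIcc_of_le (ha.trans hab) hb))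

end PWCont

section PWPoly

variable {d p : ℕ} {t0 tend : ℝ} {M M' : TimeMesh t0 tend} {f g : ℝ → Euc d}

theorem PWPoly.deriv {f' : ℝ → Euc d} (hf : PWPoly d M p f)
    (hd : ∀ i, ∀ t ∈ Ioo (M.a i) (M.b i), HasDerivAt f (f' t) t) : PWPoly d M (p - 1) f' :=
  pwPoly_iff.2 fun i => (pwPoly_iff.1 hf i).deriv isOpen_Ioo (hd i)

theorem PWPoly.sub (hf : PWPoly d M p f) (hg : PWPoly d M p g) : PWPoly d M p (f - g) :=
  pwPoly_iff.2 fun i => (pwPoly_iff.1 hf i).sub (pwPoly_iff.1 hg i)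

theorem PWPoly.of_refines (h : M'.Refines M) (hf : PWPoly d M p f) : PWPoly d M' p f :=
  pwPoly_iff.2 fun j =>
    let ⟨i, hi⟩ := h.exists_Ioo_subset j
    (pwPoly_iff.1 hf i).mono hi

theorem pwPoly_const (v : Euc d) : PWPoly d M p fun _ => v :=
  pwPoly_iff.2 fun _ => polyOn_const p v _

theorem PWPoly.indicator_of_refines (h : M'.Refines M) (hf : PWPoly d M' p f) (i : Fin M.n) :
    PWPoly d M' p ((Ioo (M.a i) (M.b i)).indicator f) :=
  pwPoly_iff.2 fun j => (h.Ioo_subset_or_disjoint j i).elim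
    (pwPoly_iff.1 hf j).indicator_of_subset (polyOn_indicator_of_disjoint p f)

theorem PWPoly.indicator_of_common {i : Fin M.n} (hc : M.Common M' i) (hf : PWPoly d M' p f) :
    PWPoly d M p ((Ioo (M.a i) (M.b i)).indicator f) := by
  refine pwPoly_iff.2 fun k => ?_
  obtain ⟨j, hja, hjb⟩ := hc
  rcases eq_or_ne k i with rfl | hne
  · have hj := pwPoly_iff.1 hf j
    rw [hja, hjb] at hj
    exact hj.indicator_of_subset subset_rfl
  · exact polyOn_indicator_of_disjoint p f (M.disjoint_Ioo hne)

end PWPoly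

section PGSol

variable {d p : ℕ} {t0 tend : ℝ} {M : TimeMesh t0 tend} {F : ℝ → Euc d → Euc d} {y0 : Euc d}
  {u u' u'' : ℝ → Euc d}

theorem PGSol.integral_inner_eq_zero (hsol : PGSol d M p F y0 u u' u'') {a b : ℝ} (ha : t0 ≤ a)
    (hab : a ≤ b) (hb : b ≤ tend) {w : ℝ → Euc d}
    (hw : PWPoly d M (p - 1) ((Ioo a b).indicator w)) :
    ∫ t in a..b, inner ℝ (u' t - F t (u t)) (w t) = 0 := by
  rw [← integral_inner_indicator_Ioo ha hab hb]
  exact hsol.galerkin _ hw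

theorem PGSol.pwPoly_deriv (hsol : PGSol d M p F y0 u u' u'') : PWPoly d M (p - 1) u' :=
  hsol.mem.poly.deriv hsol.mem.deriv1

theorem PGSol.pwPoly_deriv2 (hsol : PGSol d M p F y0 u u' u'') : PWPoly d M (p - 1 - 1) u'' :=
  hsol.pwPoly_deriv.deriv hsol.mem.deriv2

theorem PGSol.continuousOn_comp {X : Type*} [TopologicalSpace X]
    (hsol : PGSol d M p F y0 u u' u'') {H : ℝ → Euc d → X}
    (hH : ContinuousOn ↿H (Icc t0 tend ×ˢ univ)) :
    ContinuousOn (fun t => H t (u t)) (Icc t0 tend) :=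
  hH.comp (continuousOn_id.prodMk hsol.mem.cont) fun _ ht => ⟨ht, mem_univ _⟩

theorem PGSol.pwCont_residual (hsol : PGSol d M p F y0 u u' u'')
    (hF : ContinuousOn ↿F (Icc t0 tend ×ˢ univ)) : PWCont M fun t => u' t - F t (u t) :=
  hsol.pwPoly_deriv.pwCont.comp₂ continuous_sub ((hsol.continuousOn_comp hF).pwCont M)

theorem PGSol.integral_residual_eq_zero (hsol : PGSol d M p F y0 u u' u'')
    (hF : ContinuousOn ↿F (Icc t0 tend ×ˢ univ)) (i : Fin M.n) :
    ∫ t in M.a i..M.b i, (u' t - F t (u t)) = 0 := by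
  have hab := (M.a_lt_b i).le
  rw [intervalIntegral.integral_of_le hab]
  refine integral_eq_zero_of_forall_integral_inner_eq_zero ℝ _
    ((hsol.pwCont_residual hF).intervalIntegrable_piece i).1 fun c => ?_
  have h := hsol.integral_inner_eq_zero (M.t0_le_a i) hab (M.b_le_tend i) (w := fun _ => c)
    ((pwPoly_const c).indicator_of_refines M.refines_refl i)
  rw [intervalIntegral.integral_of_le hab] at h
  simpa only [real_inner_comm] using h

end PGSol

def refinedResidualSq {d : ℕ} {t0 tend : ℝ} (Mc Mf : TimeMesh t0 tend) (F : ℝ → Euc d → Euc d)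
    (u u' : ℝ → Euc d) (i : Fin Mc.n) : ℝ :=
  if Mc.Common Mf i then 0 else ∫ t in Mc.a i..Mc.b i, ‖u' t - F t (u t)‖ ^ 2

section DiscreteReliability

variable {d p : ℕ} {t0 tend L1 : ℝ} {F : ℝ → Euc d → Euc d} {y0 : Euc d}
  {Mc Mf : TimeMesh t0 tend} {u u' u'' uh uh' uh'' : ℝ → Euc d}

theorem refinedResidualSq_nonneg (i : Fin Mc.n) : 0 ≤ refinedResidualSq Mc Mf F u u' i := by
  unfold refinedResidualSq
  split_ifs
  exacts [le_rfl, intervalIntegral.integral_nonneg (Mc.a_lt_b i).le fun _ _ => sq_nonneg _]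

theorem PGSol.pwPoly_deriv_sub (hu : PGSol d Mc p F y0 u u' u'')
    (huh : PGSol d Mf p F y0 uh uh' uh'') (href : Mf.Refines Mc) :
    PWPoly d Mf (p - 1) (uh' - u') :=
  huh.pwPoly_deriv.sub (hu.pwPoly_deriv.of_refines href)

theorem PGSol.integral_deriv_sub_eq (hu : PGSol d Mc p F y0 u u' u'')
    (huh : PGSol d Mf p F y0 uh uh' uh'') (href : Mf.Refines Mc) {s t : ℝ} (hs : t0 ≤ s)
    (hst : s ≤ t) (ht : t ≤ tend) :
    ∫ x in s..t, (uh' x - u' x) = (uh t - u t) - (uh s - u s) :=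
  Mf.integral_eq_sub_of_hasDerivAt (huh.mem.cont.sub hu.mem.cont)
    (fun j x hx => by
      obtain ⟨i, hi⟩ := href.exists_Ioo_subset j
      exact (huh.mem.deriv1 j x hx).sub (hu.mem.deriv1 i x (hi hx)))
    ((hu.pwPoly_deriv_sub huh href).pwCont.intervalIntegrable le_rfl Mf.t0_lt_tend.le le_rfl)
    hs hst ht

theorem PGSol.integral_norm_sq_deriv_sub_eq (hu : PGSol d Mc p F y0 u u' u'')
    (huh : PGSol d Mf p F y0 uh uh' uh'') (href : Mf.Refines Mc)
    (hF : ContinuousOn ↿F (Icc t0 tend ×ˢ univ)) (i : Fin Mc.n) {r : ℝ → Euc d}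
    (hr : PWCont Mc r)
    (horth : ∫ t in Mc.a i..Mc.b i, inner ℝ (u' t - F t (u t) - r t) (uh' t - u' t) = 0) :
    ∫ t in Mc.a i..Mc.b i, ‖uh' t - u' t‖ ^ 2 =
      ∫ t in Mc.a i..Mc.b i, inner ℝ (F t (uh t) - F t (u t) - r t) (uh' t - u' t) := by
  have ha := Mc.t0_le_a i
  have hab := (Mc.a_lt_b i).le
  have hb := Mc.b_le_tend i
  have he' := hu.pwPoly_deriv_sub huh href
  have cE' : PWCont Mf fun t => uh' t - u' t := he'.pwCont
  have cr := hr.of_refines href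
  have hint : ∀ {v : ℝ → Euc d}, PWCont Mf v →
      IntervalIntegrable (fun t => inner ℝ (v t) (uh' t - u' t)) volume (Mc.a i) (Mc.b i) :=
    fun hv => (hv.comp₂ continuous_inner cE').intervalIntegrable ha hab hb
  have cX := hint (huh.pwCont_residual hF)
  have cG := hint (v := fun t => F t (uh t) - F t (u t) - r t)
    ((((huh.continuousOn_comp hF).sub (hu.continuousOn_comp hF)).pwCont Mf).comp₂
      continuous_sub cr)
  have cZ := hint (((hu.pwCont_residual hF).of_refines href).comp₂ continuous_sub cr)
  have hfine : ∫ t in Mc.a i..Mc.b i, inner ℝ (uh' t - F t (uh t)) (uh' t - u' t) = 0 :=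
    huh.integral_inner_eq_zero ha hab hb (he'.indicator_of_refines href i)
  have hsplit : ∀ t, ‖uh' t - u' t‖ ^ 2 =
      inner ℝ (uh' t - F t (uh t)) (uh' t - u' t)
        + inner ℝ (F t (uh t) - F t (u t) - r t) (uh' t - u' t)
        - inner ℝ (u' t - F t (u t) - r t) (uh' t - u' t) := fun t => by
    rw [← inner_add_left, ← inner_sub_left, ← real_inner_self_eq_norm_sq]
    congr 1
    abel
  simp_rw [hsplit]
  rw [intervalIntegral.integral_sub (cX.add cG) cZ, intervalIntegral.integral_add cX cG, hfine,
    horth, zero_add, sub_zero]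

theorem PGSol.integral_norm_sq_deriv_sub_le_of_orthogonal (hu : PGSol d Mc p F y0 u u' u'')
    (huh : PGSol d Mf p F y0 uh uh' uh'') (href : Mf.Refines Mc)
    (hF : ContinuousOn ↿F (Icc t0 tend ×ˢ univ))
    (hLip : ∀ t ∈ Icc t0 tend, ∀ a b : Euc d, ‖F t a - F t b‖ ≤ L1 * ‖a - b‖) (i : Fin Mc.n)
    {r : ℝ → Euc d} (hr : PWCont Mc r)
    (horth : ∫ t in Mc.a i..Mc.b i, inner ℝ (u' t - F t (u t) - r t) (uh' t - u' t) = 0) :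
    ∫ t in Mc.a i..Mc.b i, ‖uh' t - u' t‖ ^ 2 ≤
      2 * L1 ^ 2 * (∫ t in Mc.a i..Mc.b i, ‖uh t - u t‖ ^ 2) +
        2 * ∫ t in Mc.a i..Mc.b i, ‖r t‖ ^ 2 := by
  have ha := Mc.t0_le_a i
  have hab := (Mc.a_lt_b i).le
  have hb := Mc.b_le_tend i
  have hint : ∀ {f : ℝ → ℝ}, PWCont Mf f → IntervalIntegrable f volume (Mc.a i) (Mc.b i) :=
    fun hf => hf.intervalIntegrable ha hab hb
  have cE' : PWCont Mf fun t => uh' t - u' t := (hu.pwPoly_deriv_sub huh href).pwCont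
  have cE : PWCont Mf fun t => ‖uh t - u t‖ := (huh.mem.cont.sub hu.mem.cont).norm.pwCont Mf
  have cr : PWCont Mf fun t => ‖r t‖ := (hr.of_refines href).comp continuous_norm
  have cG : PWCont Mf fun t => F t (uh t) - F t (u t) - r t :=
    (((huh.continuousOn_comp hF).sub (hu.continuousOn_comp hF)).pwCont Mf).comp₂
      continuous_sub (hr.of_refines href)
  have hnorm : ∀ t ∈ Ioo (Mc.a i) (Mc.b i),
      ‖F t (uh t) - F t (u t) - r t‖ ≤ L1 * ‖uh t - u t‖ + ‖r t‖ := fun t ht =>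
    (norm_sub_le _ _).trans (by
      gcongr
      exact hLip t (Icc_subset_Icc ha hb (Ioo_subset_Icc_self ht)) _ _)
  have hc := hint (cE.comp₂ (φ := fun x y => (L1 * x + y) ^ 2) (by fun_prop) cr)
  exact (integral_norm_sq_le_of_integral_inner hab (hint (cE'.comp (continuous_norm.pow 2)))
    (hint (cG.comp₂ continuous_inner cE')) hc
    (hu.integral_norm_sq_deriv_sub_eq huh href hF i hr horth) hnorm).trans
    (integral_mul_add_sq_le hab hc (hint (cE.comp (continuous_pow 2)))
      (hint (cr.comp (continuous_pow 2))))

theorem PGSol.integral_norm_sq_deriv_sub_le (hu : PGSol d Mc p F y0 u u' u'')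
    (huh : PGSol d Mf p F y0 uh uh' uh'') (href : Mf.Refines Mc)
    (hF : ContinuousOn ↿F (Icc t0 tend ×ˢ univ))
    (hLip : ∀ t ∈ Icc t0 tend, ∀ a b : Euc d, ‖F t a - F t b‖ ≤ L1 * ‖a - b‖) (i : Fin Mc.n) :
    ∫ t in Mc.a i..Mc.b i, ‖uh' t - u' t‖ ^ 2 ≤
      2 * L1 ^ 2 * (∫ t in Mc.a i..Mc.b i, ‖uh t - u t‖ ^ 2) +
        2 * refinedResidualSq Mc Mf F u u' i := by
  unfold refinedResidualSq
  split_ifs with hc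
  · have horth := hu.integral_inner_eq_zero (Mc.t0_le_a i) (Mc.a_lt_b i).le (Mc.b_le_tend i)
      ((hu.pwPoly_deriv_sub huh href).indicator_of_common hc)
    simpa using hu.integral_norm_sq_deriv_sub_le_of_orthogonal huh href hF hLip i
      (continuousOn_const.pwCont Mc) (r := fun _ => 0) (by simpa using horth)
  · exact hu.integral_norm_sq_deriv_sub_le_of_orthogonal huh href hF hLip i
      (hu.pwCont_residual hF) (by simp)

theorem PGSol.integral_norm_sq_residual_le {M : TimeMesh t0 tend} {Ft : ℝ → Euc d → Euc d}
    {Fy : ℝ → Euc d → Euc d →L[ℝ] Euc d} (hu : PGSol d M p F y0 u u' u'')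
    (hF : ContinuousOn ↿F (Icc t0 tend ×ˢ univ))
    (hFt : ∀ t ∈ Icc t0 tend, ∀ a : Euc d, HasDerivAt (fun s => F s a) (Ft t a) t)
    (hFy : ∀ t ∈ Icc t0 tend, ∀ a : Euc d, HasFDerivAt (F t) (Fy t a) a)
    (hFtc : ContinuousOn ↿Ft (Icc t0 tend ×ˢ univ))
    (hFyc : ContinuousOn ↿Fy (Icc t0 tend ×ˢ univ)) (i : Fin M.n) :
    ∫ t in M.a i..M.b i, ‖u' t - F t (u t)‖ ^ 2 ≤ etaSq d Ft Fy u u' u'' (M.a i) (M.b i) := by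
  have cR := hu.pwCont_residual hF
  have cρ : PWCont M fun t => u'' t - (Ft t (u t) + Fy t (u t) (u' t)) :=
    hu.pwPoly_deriv2.pwCont.comp₂ continuous_sub (((hu.continuousOn_comp hFtc).pwCont M).comp₂
      continuous_add (((hu.continuousOn_comp hFyc).pwCont M).comp₂ (φ := fun A x => A x)
        (continuous_fst.clm_apply continuous_snd) hu.pwPoly_deriv.pwCont))
  have hderiv : ∀ t ∈ Ioo (M.a i) (M.b i), HasDerivAt (fun t => u' t - F t (u t))
      (u'' t - (Ft t (u t) + Fy t (u t) (u' t))) t := fun t ht => by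
    have hnhds : Icc t0 tend ×ˢ univ ∈ 𝓝 (t, u t) := prod_mem_nhds
      (Icc_mem_nhds ((M.t0_le_a i).trans_lt ht.1) (ht.2.trans_le (M.b_le_tend i))) Filter.univ_mem
    exact (hu.mem.deriv2 i t ht).sub (hasDerivAt_comp_of_partial
      (Filter.eventually_of_mem hnhds fun x hx => hFt x.1 hx.1 x.2)
      (Filter.eventually_of_mem hnhds fun x hx => hFy x.1 hx.1 x.2)
      (hFtc.continuousAt hnhds) (hFyc.continuousAt hnhds) (hu.mem.deriv1 i t ht))
  have := integral_norm_sq_le_of_integral_eq_zero (M.a_lt_b i).le hderiv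
    (cR.intervalIntegrable_piece i) ((cR.comp (continuous_norm.pow 2)).intervalIntegrable_piece i)
    (cρ.intervalIntegrable_piece i) ((cρ.comp (continuous_norm.pow 2)).intervalIntegrable_piece i)
    (hu.integral_residual_eq_zero hF i)
  unfold etaSq
  simpa only [norm_sub_rev (u'' _)] using this

theorem PGSol.local_step (hu : PGSol d Mc p F y0 u u' u'') (huh : PGSol d Mf p F y0 uh uh' uh'')
    (href : Mf.Refines Mc) (hF : ContinuousOn ↿F (Icc t0 tend ×ˢ univ))
    (hLip : ∀ t ∈ Icc t0 tend, ∀ a b : Euc d, ‖F t a - F t b‖ ≤ L1 * ‖a - b‖) (i : Fin Mc.n)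
    (h1 : Mc.len i ≤ 1) (hL : 8 * L1 ^ 2 * Mc.len i ≤ 1) :
    ∫ t in Mc.a i..Mc.b i, ‖uh' t - u' t‖ ^ 2 ≤
        8 * L1 ^ 2 * Mc.len i * ‖uh (Mc.a i) - u (Mc.a i)‖ ^ 2 +
          4 * refinedResidualSq Mc Mf F u u' i ∧
      ∫ t in Mc.a i..Mc.b i, ‖uh t - u t‖ ^ 2 ≤
        2 * Mc.len i * ‖uh (Mc.a i) - u (Mc.a i)‖ ^ 2 +
          2 * ∫ t in Mc.a i..Mc.b i, ‖uh' t - u' t‖ ^ 2 ∧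
      ‖uh (Mc.b i) - u (Mc.b i)‖ ^ 2 ≤
        (1 + (1 + 16 * L1 ^ 2) * Mc.len i) * ‖uh (Mc.a i) - u (Mc.a i)‖ ^ 2 +
          8 * refinedResidualSq Mc Mf F u u' i := by
  have cE' : PWCont Mf fun t => uh' t - u' t := (hu.pwPoly_deriv_sub huh href).pwCont
  exact local_step_bounds (e := fun t => uh t - u t) (e' := fun t => uh' t - u' t)
    (θ := refinedResidualSq Mc Mf F u u' i) (Mc.a_lt_b i) h1 hL
    (fun t ht => (hu.integral_deriv_sub_eq huh href (Mc.t0_le_a i) ht.1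
      (ht.2.trans (Mc.b_le_tend i))).symm)
    ((((huh.mem.cont.sub hu.mem.cont).norm.pow 2).pwCont Mc).intervalIntegrable_piece i)
    (cE'.intervalIntegrable (Mc.t0_le_a i) (Mc.a_lt_b i).le (Mc.b_le_tend i))
    ((cE'.comp (continuous_norm.pow 2)).intervalIntegrable (Mc.t0_le_a i) (Mc.a_lt_b i).le
      (Mc.b_le_tend i))
    (hu.integral_norm_sq_deriv_sub_le huh href hF hLip i)

theorem PGSol.h1Sq_eq_sum (hu : PGSol d Mc p F y0 u u' u'')
    (huh : PGSol d Mf p F y0 uh uh' uh'') (href : Mf.Refines Mc) :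
    h1Sq d t0 tend (fun t => uh t - u t) (fun t => uh' t - u' t) =
      (∑ i, ∫ t in Mc.a i..Mc.b i, ‖uh t - u t‖ ^ 2) +
        ∑ i, ∫ t in Mc.a i..Mc.b i, ‖uh' t - u' t‖ ^ 2 := by
  have cE' : PWCont Mf fun t => uh' t - u' t := (hu.pwPoly_deriv_sub huh href).pwCont
  rw [h1Sq, Mc.integral_eq_sum (f := fun t => ‖uh t - u t‖ ^ 2)
      (((huh.mem.cont.sub hu.mem.cont).norm.pow 2).pwCont Mc).intervalIntegrable_piece,
    Mc.integral_eq_sum (f := fun t => ‖uh' t - u' t‖ ^ 2) fun i =>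
      (cE'.comp (continuous_norm.pow 2)).intervalIntegrable (Mc.t0_le_a i) (Mc.a_lt_b i).le
        (Mc.b_le_tend i)]

theorem PGSol.sum_refinedResidualSq_le {Ft : ℝ → Euc d → Euc d}
    {Fy : ℝ → Euc d → Euc d →L[ℝ] Euc d} (hu : PGSol d Mc p F y0 u u' u'')
    (hF : ContinuousOn ↿F (Icc t0 tend ×ˢ univ))
    (hFt : ∀ t ∈ Icc t0 tend, ∀ a : Euc d, HasDerivAt (fun s => F s a) (Ft t a) t)
    (hFy : ∀ t ∈ Icc t0 tend, ∀ a : Euc d, HasFDerivAt (F t) (Fy t a) a)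
    (hFtc : ContinuousOn ↿Ft (Icc t0 tend ×ˢ univ))
    (hFyc : ContinuousOn ↿Fy (Icc t0 tend ×ˢ univ)) :
    ∑ i, refinedResidualSq Mc Mf F u u' i ≤
      ∑ i ∈ Finset.univ.filter (fun i : Fin Mc.n => ¬ Mc.Common Mf i),
        etaSq d Ft Fy u u' u'' (Mc.a i) (Mc.b i) := by
  rw [Finset.sum_filter]
  refine Finset.sum_le_sum fun i _ => ?_
  by_cases hc : Mc.Common Mf i
  · simp [refinedResidualSq, hc]
  · simpa [refinedResidualSq, hc] using hu.integral_norm_sq_residual_le hF hFt hFy hFtc hFyc i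

end DiscreteReliability

theorem stmt_12_general
    (L1 L2 : ℝ) (p : ℕ) (Tlen : ℝ) (hTlen : 0 < Tlen) :
    ∃ τ0 Cdrel : ℝ, 0 < τ0 ∧ 0 < Cdrel ∧
      ∀ (t0 tend : ℝ), tend - t0 = Tlen →
      ∀ (d : ℕ), 1 ≤ d →
      ∀ (F Ft : ℝ → Euc d → Euc d) (Fy : ℝ → Euc d → (Euc d →L[ℝ] Euc d)),
        -- `F` is Lipschitz in the second argument:
        (∀ t ∈ Icc t0 tend, ∀ a b : Euc d, ‖F t a - F t b‖ ≤ L1 * ‖a - b‖) →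
        -- `Ft`, `Fy` are the partial derivatives of `F`:
        (∀ t ∈ Icc t0 tend, ∀ a : Euc d, HasDerivAt (fun s => F s a) (Ft t a) t) →
        (∀ t ∈ Icc t0 tend, ∀ a : Euc d, HasFDerivAt (F t) (Fy t a) a) →
        -- the total Jacobian is Lipschitz with constant `L₂`:
        (∀ t1 ∈ Icc t0 tend, ∀ t2 ∈ Icc t0 tend, ∀ a b : Euc d,
          ‖Ft t1 a - Ft t2 b‖ ≤ L2 * (|t1 - t2| + ‖a - b‖) ∧
          ‖Fy t1 a - Fy t2 b‖ ≤ L2 * (|t1 - t2| + ‖a - b‖)) →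
      ∀ (y0 : Euc d),
      ∀ (Mc Mf : TimeMesh t0 tend), Mc.maxStep ≤ τ0 → Mf.Refines Mc →
      ∀ (u u' u'' uh uh' uh'' : ℝ → Euc d),
        PGSol d Mc p F y0 u u' u'' → PGSol d Mf p F y0 uh uh' uh'' →
        h1Sq d t0 tend (fun t => uh t - u t) (fun t => uh' t - u' t) ≤
          Cdrel * ∑ i ∈ Finset.univ.filter (fun i : Fin Mc.n => ¬ Mc.Common Mf i),
            etaSq d Ft Fy u u' u'' (Mc.a i) (Mc.b i) := by
  refine ⟨1 / (8 * (1 + L1 ^ 2)), drelConst L1 Tlen, by positivity, drelConst_pos L1 hTlen.le, ?_⟩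
  intro t0 tend hT d _ F Ft Fy hLip hFt hFy hJac y0 Mc Mf hstep href u u' u'' uh uh' uh'' hu huh
  have hF := continuousOn_uncurry_of_lipschitz hLip fun a t ht =>
    (hFt t ht a).continuousAt.continuousWithinAt
  have hFtc := continuousOn_uncurry_of_norm_sub_le fun t₁ h₁ t₂ h₂ a b => (hJac t₁ h₁ t₂ h₂ a b).1
  have hFyc := continuousOn_uncurry_of_norm_sub_le fun t₁ h₁ t₂ h₂ a b => (hJac t₁ h₁ t₂ h₂ a b).2
  have hloc := fun i => hu.local_step huh href hF hLip i (Mc.len_le_of_maxStep_le hstep i).1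
    (Mc.len_le_of_maxStep_le hstep i).2
  have hx0 : ‖uh (Mc.pts 0) - u (Mc.pts 0)‖ ^ 2 = 0 := by simp [Mc.first, hu.init, huh.init]
  rw [hu.h1Sq_eq_sum huh href]
  calc _ ≤ drelConst L1 Tlen * ∑ i, refinedResidualSq Mc Mf F u u' i :=
        sum_le_of_local_steps (x := fun m => ‖uh (Mc.pts m) - u (Mc.pts m)‖ ^ 2)
          (fun i => (sub_pos.2 (Mc.a_lt_b i)).le) (Mc.sum_len.trans hT) refinedResidualSq_nonneg
          hx0 (fun i => (hloc i).2.2) (fun i => (hloc i).1) (fun i => (hloc i).2.1)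
    _ ≤ _ := mul_le_mul_of_nonneg_left (hu.sum_refinedResidualSq_le hF hFt hFy hFtc hFyc)
        (drelConst_pos L1 hTlen.le).le

/-- discrete reliability, axiom (A4).
There are `τ₀ > 0` and `C_drel > 0`, depending only on `L₁`, `L₂`, `p` and the interval
length `t_end − t₀ = Tlen`, such that for every mesh `𝒯` with maximal step size `≤ τ₀`,
every refinement `𝒯̂`, and Petrov–Galerkin solutions `y_𝒯`, `y_𝒯̂` on the two meshes,
`‖y_𝒯̂ − y_𝒯‖²_{H¹} ≤ C_drel ∑_{T ∈ 𝒯 \\ 𝒯̂} η(y_𝒯; T)²`. -/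
theorem stmt_12
    (L1 L2 : ℝ) (p : ℕ) (hp : 1 ≤ p) (Tlen : ℝ) (hTlen : 0 < Tlen) :
    ∃ τ0 Cdrel : ℝ, 0 < τ0 ∧ 0 < Cdrel ∧
      ∀ (t0 tend : ℝ), tend - t0 = Tlen →
      ∀ (d : ℕ), 1 ≤ d →
      ∀ (F Ft : ℝ → Euc d → Euc d) (Fy : ℝ → Euc d → (Euc d →L[ℝ] Euc d)),
        -- `F` is Lipschitz in the second argument:
        (∀ t ∈ Icc t0 tend, ∀ a b : Euc d, ‖F t a - F t b‖ ≤ L1 * ‖a - b‖) →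
        -- `Ft`, `Fy` are the partial derivatives of `F`:
        (∀ t ∈ Icc t0 tend, ∀ a : Euc d, HasDerivAt (fun s => F s a) (Ft t a) t) →
        (∀ t ∈ Icc t0 tend, ∀ a : Euc d, HasFDerivAt (F t) (Fy t a) a) →
        -- the total Jacobian is Lipschitz with constant `L₂`:
        (∀ t1 ∈ Icc t0 tend, ∀ t2 ∈ Icc t0 tend, ∀ a b : Euc d,
          ‖Ft t1 a - Ft t2 b‖ ≤ L2 * (|t1 - t2| + ‖a - b‖) ∧
          ‖Fy t1 a - Fy t2 b‖ ≤ L2 * (|t1 - t2| + ‖a - b‖)) →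
      ∀ (y0 : Euc d),
      ∀ (Mc Mf : TimeMesh t0 tend), Mc.maxStep ≤ τ0 → Mf.Refines Mc →
      ∀ (u u' u'' uh uh' uh'' : ℝ → Euc d),
        PGSol d Mc p F y0 u u' u'' → PGSol d Mf p F y0 uh uh' uh'' →
        h1Sq d t0 tend (fun t => uh t - u t) (fun t => uh' t - u' t) ≤
          Cdrel * ∑ i ∈ Finset.univ.filter (fun i : Fin Mc.n => ¬ Mc.Common Mf i),
            etaSq d Ft Fy u u' u'' (Mc.a i) (Mc.b i) :=
  stmt_12_general L1 L2 p Tlen hTlen
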